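/- Invariance of the ultradiscrete QRT map: let α₀₀, α₀₁, α₀₂, α₁₀, α₁₂, α₂₀, α₂₁, α₂₂ be real parameters, and define F₁(y) = max(α₂₀+2y, α₂₁+y, α₂₂), F₃(y) = max(α₀₀+2y, α₀₁+y, α₀₂), G₁(x) = max(α₀₂+2x, α₁₂+x, α₂₂), G₃(x) = max(α₀₀+2x, α₁₀+x, α₂₀). Then the ultradiscrete QRT map (x,y) ↦ (x̄, ȳ) given by x̄ = F₁(y) − F₃(y) − x and ȳ = G₁(x̄) − G₃(x̄) − y preserves the function K(x,y) := max(α₀₀+2x+2y, α₀₁+2x+y, α₀₂+2x, α₁₀+x+2y, α₁₂+x, α₂₀+2y, α₂₁+y, α₂₂) − x − y; that is, K(x̄, ȳ) = K(x,y) for all (x,y) ∈ ℝ². Consequently the curves Σ_κ : κ + x + y = F(α_{−∞}; x, y) form a one-parameter family of invariant curves of the map. -/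

import Mathlib

namespace Stmt12

variable (a00 a01 a02 a10 a12 a20 a21 a22 : ℝ)

/-- `F₁(y) = max(α₂₀+2y, α₂₁+y, α₂₂)`. -/
noncomputable def F1 (y : ℝ) : ℝ := max (a20 + 2 * y) (max (a21 + y) a22)

/-- `F₃(y) = max(α₀₀+2y, α₀₁+y, α₀₂)`. -/
noncomputable def F3 (y : ℝ) : ℝ := max (a00 + 2 * y) (max (a01 + y) a02)

/-- `G₁(x) = max(α₀₂+2x, α₁₂+x, α₂₂)`. -/
noncomputable def G1 (x : ℝ) : ℝ := max (a02 + 2 * x) (max (a12 + x) a22)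

/-- `G₃(x) = max(α₀₀+2x, α₁₀+x, α₂₀)`. -/
noncomputable def G3 (x : ℝ) : ℝ := max (a00 + 2 * x) (max (a10 + x) a20)

/-- The invariant of the ultradiscrete QRT map:
`K(x,y) = F(α₋∞; x, y) − x − y` where `F(α₋∞; x, y)` is the tropical
biquadratic polynomial with `α₁₁ = −∞`. -/
noncomputable def K (x y : ℝ) : ℝ :=
  max (a00 + 2 * x + 2 * y) (max (a01 + 2 * x + y) (max (a02 + 2 * x)
    (max (a10 + x + 2 * y) (max (a12 + x) (max (a20 + 2 * y)
      (max (a21 + y) a22)))))) - x - y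

/-! For fixed `y`, `K(x, y) + x + y` is a tropical quadratic in `x` whose two roots add up to
`F₁(y) − F₃(y)`; subtracting `x` (tropical division by `x`) makes it invariant under the exchange of roots
`x ↦ F₁(y) − F₃(y) − x`. Symmetrically, it is invariant under `y ↦ G₁(x) − G₃(x) − y`, and the
ultradiscrete QRT map is the composition of these two involutions. -/

theorem max_tropicalQuadratic_sub_eq_of_add_eq {R : Type*} [CommRing R] [LinearOrder R]
    [IsOrderedRing R] {p q r u v : R} (h : u + v = r - p) :
    max (p + 2 * u) (max (q + u) r) - u = max (p + 2 * v) (max (q + v) r) - v := by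
  simp only [← max_sub_sub_right]
  have hu : p + 2 * u - u = r - v := by linear_combination h
  have hv : r - u = p + 2 * v - v := by linear_combination -h
  rw [hu, hv, add_sub_cancel_right, add_sub_cancel_right]
  ac_rfl

theorem K_eq_max_sub_in_x (x y : ℝ) : K a00 a01 a02 a10 a12 a20 a21 a22 x y =
    max (F3 a00 a01 a02 y + 2 * x) (max (max (a10 + 2 * y) a12 + x) (F1 a20 a21 a22 y))
      - x - y := by
  unfold K F1 F3
  simp only [← max_add_add_right]
  ring_nf
  ac_rfl

theorem K_eq_max_sub_in_y (x y : ℝ) : K a00 a01 a02 a10 a12 a20 a21 a22 x y =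
    max (G3 a00 a10 a20 x + 2 * y) (max (max (a01 + 2 * x) a21 + y) (G1 a02 a12 a22 x))
      - y - x := by
  unfold K G1 G3
  rw [sub_right_comm]
  simp only [← max_add_add_right]
  ring_nf
  ac_rfl

theorem K_reflect_x (x y : ℝ) :
    K a00 a01 a02 a10 a12 a20 a21 a22 (F1 a20 a21 a22 y - F3 a00 a01 a02 y - x) y =
      K a00 a01 a02 a10 a12 a20 a21 a22 x y := by
  simp only [K_eq_max_sub_in_x]
  exact congrArg (· - y) (max_tropicalQuadratic_sub_eq_of_add_eq (by ring))

theorem K_reflect_y (x y : ℝ) :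
    K a00 a01 a02 a10 a12 a20 a21 a22 x (G1 a02 a12 a22 x - G3 a00 a10 a20 x - y) =
      K a00 a01 a02 a10 a12 a20 a21 a22 x y := by
  simp only [K_eq_max_sub_in_y]
  exact congrArg (· - x) (max_tropicalQuadratic_sub_eq_of_add_eq (by ring))

/-- The ultradiscrete QRT map `x̄ = F₁(y) − F₃(y) − x`, `ȳ = G₁(x̄) − G₃(x̄) − y`
preserves `K`; consequently the curves `Σ_κ : κ + x + y = F(α₋∞; x, y)` form a
one-parameter family of invariant curves. -/
theorem uQRT_preserves_K (x y : ℝ) :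
    K a00 a01 a02 a10 a12 a20 a21 a22
        (F1 a20 a21 a22 y - F3 a00 a01 a02 y - x)
        (G1 a02 a12 a22 (F1 a20 a21 a22 y - F3 a00 a01 a02 y - x) -
          G3 a00 a10 a20 (F1 a20 a21 a22 y - F3 a00 a01 a02 y - x) - y) =
      K a00 a01 a02 a10 a12 a20 a21 a22 x y := by
  rw [K_reflect_y, K_reflect_x]

end Stmt12
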